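/- A bounded operator A ∈ L(B, B*) is positive if and only if there exist a Hilbert space H and a bounded operator T ∈ L(B, H) such that ⟨Ab, c⟩ = ⟨Tb, Tc⟩_H for all b, c ∈ B. -/

import Mathlib

/-!
A positive `A` is hermitian by polarization, so `⟪b, c⟫ := A c b` is a semi-inner product on `B`,
bounded by `‖A‖ ‖b‖ ‖c‖`. Separating and completing `B` for it gives the Hilbert space `H`, and
`T` is the induced map `B → H`. Conversely `⟪Tb, Tb⟫ = ‖Tb‖² ≥ 0`.
-/

open scoped ComplexOrder

/-- The conjugate dual of a complex normed space: continuous anti-linear functionals. -/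
abbrev ConjDual (B : Type*) [NormedAddCommGroup B] [NormedSpace ℂ B] :=
  B →SL[starRingEnd ℂ] ℂ

theorem exists_hilbertSpace_inner_preserving {𝕜 : Type*} [RCLike 𝕜] (E : Type u)
    [SeminormedAddCommGroup E] [InnerProductSpace 𝕜 E] :
    ∃ (H : Type u) (_ : NormedAddCommGroup H) (_ : InnerProductSpace 𝕜 H)
      (_ : CompleteSpace H) (J : E →L[𝕜] H), ∀ x y : E, inner 𝕜 (J x) (J y) = inner 𝕜 x y :=
  ⟨UniformSpace.Completion (SeparationQuotient E), inferInstance, inferInstance, inferInstance,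
    UniformSpace.Completion.toComplL.comp (SeparationQuotient.mkCLM 𝕜 E), fun x y => by
      simp only [ContinuousLinearMap.comp_apply, UniformSpace.Completion.coe_toComplL,
        SeparationQuotient.mkCLM_apply, UniformSpace.Completion.inner_coe,
        SeparationQuotient.inner_mk_mk]⟩

theorem inner_self_nonneg' {𝕜 E : Type*} [RCLike 𝕜] [SeminormedAddCommGroup E]
    [InnerProductSpace 𝕜 E] (x : E) : 0 ≤ inner 𝕜 x x := by
  rw [inner_self_eq_norm_sq_to_K]
  positivity

noncomputable section PositiveForm

variable {B : Type u} [NormedAddCommGroup B] [NormedSpace ℂ B] {A : B →L[ℂ] ConjDual B}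

theorem conj_apply_of_nonneg (hA : ∀ b : B, 0 ≤ A b b) (b c : B) :
    starRingEnd ℂ (A c b) = A b c := by
  have him : ∀ x : B, (A x x).im = 0 := fun x => (Complex.nonneg_iff.mp (hA x)).2.symm
  have hsum : A (b + c) (b + c) = A b b + A b c + A c b + A c c := by
    simp only [map_add, add_apply]
    ring
  have hsumI : A (b + Complex.I • c) (b + Complex.I • c)
      = A b b + A c c - Complex.I * A b c + Complex.I * A c b := by
    simp only [map_add, map_smul, add_apply, smul_apply, smul_eq_mul, map_smulₛₗ,
      Complex.conj_I, neg_mul]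
    linear_combination (-A c c) * Complex.I_sq
  have him_sum := him (b + c)
  have him_sumI := him (b + Complex.I • c)
  rw [hsum] at him_sum
  rw [hsumI] at him_sumI
  simp only [Complex.add_im, Complex.sub_im, Complex.mul_im, Complex.I_re, Complex.I_im,
    him b, him c] at him_sum him_sumI
  apply Complex.ext <;> simp only [Complex.conj_re, Complex.conj_im] <;> linarith

variable (A) in
/-- `B` with the semi-inner product `⟪b, c⟫ = A c b`, conjugate-linear in `b` as in Mathlib. -/
def FormSpace (_hA : ∀ b : B, 0 ≤ A b b) : Type u := B

namespace FormSpace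

variable (hA : ∀ b : B, 0 ≤ A b b)

instance : AddCommGroup (FormSpace A hA) := inferInstanceAs (AddCommGroup B)

instance : Module ℂ (FormSpace A hA) := inferInstanceAs (Module ℂ B)

instance core : PreInnerProductSpace.Core ℂ (FormSpace A hA) where
  inner x y := A (y : B) (x : B)
  conj_inner_symm x y := conj_apply_of_nonneg hA y x
  re_inner_nonneg x := (Complex.nonneg_iff.mp (hA x)).1
  add_left x y z := map_add (A (z : B)) (x : B) (y : B)
  smul_left x y r := map_smulₛₗ (A (y : B)) r (x : B)

instance : SeminormedAddCommGroup (FormSpace A hA) :=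
  InnerProductSpace.Core.toSeminormedAddCommGroup (c := core hA)

instance : InnerProductSpace ℂ (FormSpace A hA) := InnerProductSpace.ofCore (core hA)

def ofLinear : B →ₗ[ℂ] FormSpace A hA := LinearMap.id

theorem norm_ofLinear_le (x : B) : ‖ofLinear hA x‖ ≤ √‖A‖ * ‖x‖ := by
  have hre : (A x x).re ≤ ‖A‖ * ‖x‖ ^ 2 :=
    calc (A x x).re ≤ ‖A x x‖ := Complex.re_le_norm _
      _ ≤ ‖A x‖ * ‖x‖ := (A x).le_opNorm x
      _ ≤ ‖A‖ * ‖x‖ * ‖x‖ := by gcongr; exact A.le_opNorm x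
      _ = ‖A‖ * ‖x‖ ^ 2 := by ring
  calc ‖ofLinear hA x‖ = √(A x x).re := rfl
    _ ≤ √(‖A‖ * ‖x‖ ^ 2) := Real.sqrt_le_sqrt hre
    _ = √‖A‖ * ‖x‖ := by rw [Real.sqrt_mul (norm_nonneg A), Real.sqrt_sq (norm_nonneg x)]

def of : B →L[ℂ] FormSpace A hA := (ofLinear hA).mkContinuous √‖A‖ (norm_ofLinear_le hA)

theorem inner_of (b c : B) : inner ℂ (of hA c) (of hA b) = A b c := rfl

end FormSpace

end PositiveForm

/-- The paper's `⟨Tb, Tc⟩_H`, conjugate-linear in the second slot, is Mathlib's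
`inner ℂ (T c) (T b)`. -/
theorem positive_iff_factorization {B : Type u} [NormedAddCommGroup B] [NormedSpace ℂ B]
    (A : B →L[ℂ] ConjDual B) :
    (∀ b : B, 0 ≤ A b b) ↔
      ∃ (H : Type u) (_ : NormedAddCommGroup H) (_ : InnerProductSpace ℂ H)
        (_ : CompleteSpace H) (T : B →L[ℂ] H),
        ∀ b c : B, A b c = inner ℂ (T c) (T b) := by
  constructor
  · intro hA
    obtain ⟨H, _, _, hH, J, hJ⟩ :=
      exists_hilbertSpace_inner_preserving (𝕜 := ℂ) (FormSpace A hA)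
    refine ⟨H, _, _, hH, J.comp (FormSpace.of hA), fun b c => ?_⟩
    rw [ContinuousLinearMap.comp_apply, ContinuousLinearMap.comp_apply, hJ, FormSpace.inner_of]
  · rintro ⟨H, _, _, _, T, hT⟩ b
    rw [hT b b]
    exact inner_self_nonneg' (T b)
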